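/- The space L(c₀, c₀) of bounded linear operators from c₀ to itself (with the operator norm) is octahedral. -/

import Mathlib

/-!
Given unit operators `T₁, …, Tₙ` on `c₀`, pick `uᵢ` in the unit ball and coordinates `kᵢ` with
`(Tᵢ uᵢ)(kᵢ) ≈ 1`. Every functional on `c₀` is `ℓ¹`-summable on the unit vector basis, so far out
there is a coordinate `m` with `uᵢ(m) ≈ 0` and `(Tᵢ eₘ)(kᵢ) ≈ 0` for all `i`. The rank-one operator
`S f = f(m) • w`, where `w` is the indicator of a finite set containing the `kᵢ`, has norm one,
and testing `Tᵢ + S` on `uᵢ + eₘ` (norm `≈ 1`) at the coordinate `kᵢ` gives `‖Tᵢ + S‖ ≈ 2`.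
-/

open scoped ZeroAtInfty

def Octahedral (Z : Type*) [NormedAddCommGroup Z] : Prop :=
  ∀ (n : ℕ) (x : Fin n → Z), (∀ i, ‖x i‖ = 1) →
    ∀ ε > (0 : ℝ), ∃ y : Z, ‖y‖ = 1 ∧ ∀ i, 2 - ε ≤ ‖x i + y‖

open Filter Topology

namespace ZeroAtInftyContinuousMap

section Norm

variable {α : Type*} [TopologicalSpace α]

lemma abs_apply_le_norm (f : C₀(α, ℝ)) (a : α) : |f a| ≤ ‖f‖ :=
  norm_toBCF_eq_norm (f := f) ▸ f.toBCF.norm_coe_le_norm a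

lemma norm_le_of_forall_abs_le (f : C₀(α, ℝ)) {C : ℝ} (hC : 0 ≤ C) (h : ∀ a, |f a| ≤ C) :
    ‖f‖ ≤ C := by
  rw [← norm_toBCF_eq_norm]
  exact (BoundedContinuousFunction.norm_le hC).2 h

lemma exists_lt_abs_apply_of_lt_norm [Nonempty α] {f : C₀(α, ℝ)} {r : ℝ} (hr : r < ‖f‖) :
    ∃ a, r < |f a| := by
  by_contra! h
  rw [← norm_toBCF_eq_norm] at hr
  exact hr.not_ge <| BoundedContinuousFunction.norm_le_of_nonempty.2 h

lemma tendsto_cofinite_zero [DiscreteTopology α] (f : C₀(α, ℝ)) :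
    Tendsto f cofinite (𝓝 0) := by
  rw [← cocompact_eq_cofinite]
  exact f.zero_at_infty'

variable (α) in
noncomputable def evalCLM (a : α) : C₀(α, ℝ) →L[ℝ] ℝ :=
  LinearMap.mkContinuous
    { toFun := fun f => f a
      map_add' := fun _ _ => rfl
      map_smul' := fun _ _ => rfl }
    1 fun f => (one_mul ‖f‖).symm ▸ f.abs_apply_le_norm a

@[simp] lemma evalCLM_apply (a : α) (f : C₀(α, ℝ)) : evalCLM α a f = f a := rfl

lemma norm_evalCLM_le (a : α) : ‖evalCLM α a‖ ≤ 1 :=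
  LinearMap.mkContinuous_norm_le _ zero_le_one _

lemma exists_norm_le_one_lt_apply {E : Type*} [NormedAddCommGroup E] [NormedSpace ℝ E]
    [Nonempty α] (T : E →L[ℝ] C₀(α, ℝ)) {r : ℝ} (hr : r < ‖T‖) :
    ∃ (u : E) (k : α), ‖u‖ ≤ 1 ∧ r < T u k := by
  obtain ⟨u, hu, hTu⟩ := T.exists_lt_apply_of_lt_opNorm hr
  obtain ⟨k, hk⟩ := exists_lt_abs_apply_of_lt_norm hTu
  rcases lt_abs.1 hk with h | h
  · exact ⟨u, k, hu.le, h⟩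
  · exact ⟨-u, k, by simpa using hu.le, by simpa using h⟩

end Norm

section Single

variable {α : Type*} [TopologicalSpace α] [DiscreteTopology α] [DecidableEq α]

def single (a : α) : C₀(α, ℝ) where
  toFun b := if b = a then 1 else 0
  continuous_toFun := continuous_of_discreteTopology
  zero_at_infty' := by
    rw [cocompact_eq_cofinite]
    exact tendsto_const_nhds.congr' <|
      (Set.finite_singleton a).eventually_cofinite_notMem.mono fun b hb => (if_neg hb).symm

@[simp] lemma single_apply (a b : α) : single a b = if b = a then 1 else 0 := rfl

lemma norm_single (a : α) : ‖single a‖ = 1 := by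
  refine le_antisymm (norm_le_of_forall_abs_le _ zero_le_one fun b => ?_) ?_
  · rw [single_apply]
    split_ifs <;> simp
  · simpa using (single a).abs_apply_le_norm a

lemma norm_evalCLM (a : α) : ‖evalCLM α a‖ = 1 := by
  refine le_antisymm (norm_evalCLM_le a) ?_
  simpa [norm_single] using (evalCLM α a).le_opNorm (single a)

lemma sum_single_apply (s : Finset α) (c : α → ℝ) (b : α) :
    (∑ a ∈ s, c a • single a) b = if b ∈ s then c b else 0 := by
  rw [← evalCLM_apply, map_sum]
  simp

lemma sum_one_single_apply (s : Finset α) (b : α) :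
    (∑ a ∈ s, single a) b = if b ∈ s then 1 else 0 := by
  simpa using sum_single_apply s 1 b

lemma norm_sum_single {s : Finset α} (hs : s.Nonempty) : ‖∑ a ∈ s, single a‖ = 1 := by
  refine le_antisymm (norm_le_of_forall_abs_le _ zero_le_one fun b => ?_) ?_
  · rw [sum_one_single_apply]
    split_ifs <;> simp
  · obtain ⟨a, ha⟩ := hs
    simpa [sum_one_single_apply, ha] using abs_apply_le_norm (∑ a ∈ s, single a) a

lemma sum_abs_apply_single_le_norm (f : C₀(α, ℝ) →L[ℝ] ℝ) (s : Finset α) :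
    ∑ a ∈ s, |f (single a)| ≤ ‖f‖ := by
  set x := ∑ a ∈ s, (SignType.sign (f (single a)) : ℝ) • single a
  have hx : ‖x‖ ≤ 1 := norm_le_of_forall_abs_le _ zero_le_one fun b => by
    rw [sum_single_apply]
    split_ifs
    · cases SignType.sign (f (single b)) <;> simp
    · simp
  calc ∑ a ∈ s, |f (single a)| = f x := by simp [x, map_sum, sign_mul_self]
    _ ≤ ‖f‖ * 1 := (le_abs_self _).trans <| f.le_opNorm_of_le hx
    _ = ‖f‖ := mul_one _

lemma tendsto_apply_single_cofinite (f : C₀(α, ℝ) →L[ℝ] ℝ) :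
    Tendsto (fun a => f (single a)) cofinite (𝓝 0) :=
  (summable_of_sum_le (fun _ => abs_nonneg _) (sum_abs_apply_single_le_norm f)).of_abs
    |>.tendsto_cofinite_zero

lemma two_sub_le_norm_add_smulRight (T : C₀(α, ℝ) →L[ℝ] C₀(α, ℝ)) {u w : C₀(α, ℝ)} {k m : α}
    {δ : ℝ} (hu : ‖u‖ ≤ 1) (hw : w k = 1) (hTu : 1 - δ < T u k) (hum : |u m| ≤ δ)
    (hTm : |T (single m) k| ≤ δ) :
    2 - 5 * δ ≤ ‖T + (evalCLM α m).smulRight w‖ := by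
  set S := (evalCLM α m).smulRight w
  have hδ : 0 ≤ δ := (abs_nonneg _).trans hum
  have hx : ‖u + single m‖ ≤ 1 + δ := norm_le_of_forall_abs_le _ (by linarith) fun b => by
    rw [add_apply, single_apply]
    split_ifs with hb
    · subst hb
      linarith [abs_add_le (u b) 1, abs_one (α := ℝ)]
    · rw [add_zero]
      linarith [u.abs_apply_le_norm b]
  have hk : (T + S) (u + single m) k = T u k + T (single m) k + (u m + 1) := by
    simp [S, hw]
  have : 2 - 3 * δ ≤ ‖T + S‖ * (1 + δ) := calc
    2 - 3 * δ ≤ (T + S) (u + single m) k := by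
      rw [hk]
      linarith [neg_abs_le (u m), neg_abs_le (T (single m) k)]
    _ ≤ ‖(T + S) (u + single m)‖ := (le_abs_self _).trans (abs_apply_le_norm _ _)
    _ ≤ ‖T + S‖ * (1 + δ) := (T + S).le_opNorm_of_le hx
  nlinarith [norm_nonneg (T + S)]

end Single

end ZeroAtInftyContinuousMap

open ZeroAtInftyContinuousMap in
/-- The space of bounded linear operators from `c₀` to `c₀` is octahedral. -/
theorem octahedral_L_c0_c0 : Octahedral (C₀(ℕ, ℝ) →L[ℝ] C₀(ℕ, ℝ)) := by
  intro n T hT ε hε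
  obtain ⟨δ, hδ, rfl⟩ : ∃ δ > 0, ε = 5 * δ := ⟨ε / 5, by positivity, by ring⟩
  choose u k hu hTu using fun i =>
    exists_norm_le_one_lt_apply (T i) (show 1 - δ < ‖T i‖ by linarith [hT i])
  have small {g : ℕ → ℝ} (hg : Tendsto g cofinite (𝓝 0)) : ∀ᶠ m in cofinite, |g m| ≤ δ :=
    (Metric.tendsto_nhds.1 hg δ hδ).mono fun _ h => by
      rw [dist_zero_right, Real.norm_eq_abs] at h
      exact h.le
  obtain ⟨m, hm⟩ := (eventually_all.2 fun i => (small (u i).tendsto_cofinite_zero).and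
    (small (tendsto_apply_single_cofinite ((evalCLM ℕ (k i)).comp (T i))))).exists
  -- `0` is only there to keep `s` nonempty when `n = 0`
  set s := insert 0 (Finset.univ.image k)
  refine ⟨(evalCLM ℕ m).smulRight (∑ a ∈ s, single a), ?_, fun i => ?_⟩
  · rw [ContinuousLinearMap.norm_smulRight_apply, norm_evalCLM,
      norm_sum_single (Finset.insert_nonempty _ _), one_mul]
  · have hw : (∑ a ∈ s, single a) (k i) = 1 := by simp [sum_one_single_apply, s]
    linarith [two_sub_le_norm_add_smulRight (T i) (hu i) hw (hTu i) (hm i).1 (hm i).2]
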